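/- arXiv:1408.0455 — 4 statements merged into one kernel-verified Lean document; each statement's English description precedes it below -/
import Mathlib

section
/- Let Y ~ Beta(K-1, n_T-K) with integers 1 < K < n_T. Then E[-ln Y] = Σ_{m=K-1}^{n_T-2} Σ_{l=0}^{n_T-m-2} [(n_T-2)! / (m! · l! · (n_T-m-2-l)!)] · (-1)^l / (m+l). -/
open MeasureTheory Real Finset
open scoped Nat

/-!
For `Y ~ Beta(a + 1, b + 1)` one has `E[-log Y] = ∑_{m = a+1}^{a+b+1} 1 / m`. Writing
`I(a, b) = ∫₀¹ -log x · xᵃ (1 - x)ᵇ dx`, the identity `xᵃ(1-x)ᵇ⁺¹ = xᵃ(1-x)ᵇ - xᵃ⁺¹(1-x)ᵇ`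
gives `I(a, b + 1) = I(a, b) - I(a + 1, b)`, and the same recursion for the beta integrals, so
induction on `b` from `I(a, 0) = 1 / (a + 1)²` yields
`I(a, b) = B(a + 1, b + 1) · ∑_{j ≤ b} 1 / (a + 1 + j)`.
The double sum collapses to the same harmonic sum because each inner sum equals `1 / m`: after
factoring out a binomial coefficient it is the alternating sum `∑ (-1)ˡ C(n, l) / (m + l)`
obtained by expanding `(1 - x)ⁿ` in `∫₀¹ xᵐ⁻¹ (1 - x)ⁿ dx = B(m, n + 1)`.
-/

/-- `natBeta a b = B(a + 1, b + 1)`. -/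
noncomputable def natBeta (a b : ℕ) : ℝ := (a ! : ℝ) * b ! / (a + b + 1)!

lemma natBeta_zero_right (a : ℕ) : natBeta a 0 = 1 / (a + 1) := by
  rw [natBeta, Nat.factorial_succ, Nat.factorial_zero]
  push_cast
  field_simp

lemma natBeta_sub_natBeta_succ_left (a b : ℕ) :
    natBeta a b - natBeta (a + 1) b = natBeta a (b + 1) := by
  rw [natBeta, natBeta, natBeta, show a + 1 + b + 1 = a + b + 1 + 1 by ring,
    show a + (b + 1) + 1 = a + b + 1 + 1 by ring, Nat.factorial_succ (a + b + 1),
    Nat.factorial_succ a, Nat.factorial_succ b]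
  push_cast
  field_simp
  ring

lemma natBeta_succ_left_div (a b : ℕ) :
    natBeta (a + 1) b / (a + 1) = natBeta a b / (a + b + 2) := by
  rw [natBeta, natBeta, show a + 1 + b + 1 = a + b + 1 + 1 by ring,
    Nat.factorial_succ (a + b + 1), Nat.factorial_succ a]
  push_cast
  field_simp
  ring

lemma natBeta_pos (a b : ℕ) : 0 < natBeta a b := by
  unfold natBeta
  positivity

lemma Gamma_mul_Gamma_div_Gamma_eq_natBeta (a b : ℕ) :
    Gamma (a + 1) * Gamma (b + 1) / Gamma (a + b + 2) = natBeta a b := by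
  rw [show (a : ℝ) + b + 2 = (a + b + 1 : ℕ) + 1 by push_cast; ring]
  simp only [Gamma_nat_eq_factorial, natBeta]

lemma integral_pow_mul_one_sub_pow (a b : ℕ) :
    ∫ x in (0 : ℝ)..1, x ^ a * (1 - x) ^ b = natBeta a b := by
  induction b generalizing a with
  | zero => simp [natBeta_zero_right]
  | succ b ih =>
    have hsplit : ∀ x : ℝ,
        x ^ a * (1 - x) ^ (b + 1) = x ^ a * (1 - x) ^ b - x ^ (a + 1) * (1 - x) ^ b :=
      fun x => by ring
    simp_rw [hsplit]
    rw [intervalIntegral.integral_sub (by apply Continuous.intervalIntegrable; fun_prop)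
      (by apply Continuous.intervalIntegrable; fun_prop), ih, ih, natBeta_sub_natBeta_succ_left]

lemma integral_pow_mul_one_sub_pow_eq_sum (a b : ℕ) :
    ∫ x in (0 : ℝ)..1, x ^ a * (1 - x) ^ b =
      ∑ l ∈ range (b + 1), (-1) ^ l * b.choose l / (a + 1 + l : ℝ) := by
  have hexpand : ∀ x : ℝ, x ^ a * (1 - x) ^ b =
      ∑ l ∈ range (b + 1), (-1) ^ l * b.choose l * x ^ (a + l) := by
    intro x
    rw [sub_eq_add_neg, add_comm, add_pow, mul_sum]
    refine sum_congr rfl fun l _ => ?_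
    rw [neg_pow, one_pow, pow_add]
    ring
  simp_rw [hexpand]
  rw [intervalIntegral.integral_finsetSum fun l _ => by
    apply Continuous.intervalIntegrable; fun_prop]
  refine sum_congr rfl fun l _ => ?_
  rw [intervalIntegral.integral_const_mul, integral_pow]
  push_cast
  ring

lemma sum_range_neg_one_pow_mul_choose_div (a b : ℕ) :
    ∑ l ∈ range (b + 1), (-1) ^ l * b.choose l / (a + 1 + l : ℝ) = natBeta a b := by
  rw [← integral_pow_mul_one_sub_pow_eq_sum, integral_pow_mul_one_sub_pow]

lemma intervalIntegrable_neg_log_mul_pow_mul_one_sub_pow (a b : ℕ) :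
    IntervalIntegrable (fun x : ℝ => -log x * x ^ a * (1 - x) ^ b) volume 0 1 := by
  simpa only [mul_assoc, Pi.neg_apply] using
    (intervalIntegral.intervalIntegrable_log' (a := 0) (b := 1)).neg.mul_continuousOn
      (g := fun x : ℝ => x ^ a * (1 - x) ^ b) (by fun_prop)

lemma integral_neg_log_mul_pow (a : ℕ) :
    ∫ x in (0 : ℝ)..1, -log x * x ^ a = 1 / (a + 1) ^ 2 := by
  set F : ℝ → ℝ := fun y => (y ^ (a + 1) - (a + 1) * (y ^ (a + 1) * log y)) / (a + 1) ^ 2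
  have hF : Continuous F := by
    have hxlogx : Continuous fun y : ℝ => y * log y := continuous_mul_log
    have hF_eq : F = fun y => (y ^ (a + 1) - (a + 1) * (y ^ a * (y * log y))) / (a + 1) ^ 2 := by
      funext y; simp only [F]; ring
    rw [hF_eq]
    fun_prop
  have hderiv : ∀ x ∈ Set.Ioo (0 : ℝ) 1, HasDerivAt F (-log x * x ^ a) x := by
    intro x hx
    have hpow : HasDerivAt (fun y : ℝ => y ^ (a + 1)) ((a + 1) * x ^ a) x := by
      simpa using hasDerivAt_pow (a + 1) x
    have hF' := (hpow.sub ((hpow.mul (hasDerivAt_log hx.1.ne')).const_mul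
      ((a : ℝ) + 1))).div_const (((a : ℝ) + 1) ^ 2)
    have hxinv : x ^ (a + 1) * x⁻¹ = x ^ a := by rw [pow_succ, mul_inv_cancel_right₀ hx.1.ne']
    rw [hxinv] at hF'
    refine hF'.congr_deriv ?_
    field_simp
    ring
  rw [intervalIntegral.integral_eq_sub_of_hasDerivAt_of_le zero_le_one hF.continuousOn hderiv
    (by simpa using intervalIntegrable_neg_log_mul_pow_mul_one_sub_pow a 0)]
  simp [F]

lemma integral_neg_log_mul_pow_mul_one_sub_pow (a b : ℕ) :
    ∫ x in (0 : ℝ)..1, -log x * x ^ a * (1 - x) ^ b =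
      natBeta a b * ∑ j ∈ range (b + 1), 1 / (a + 1 + j : ℝ) := by
  induction b generalizing a with
  | zero =>
    simp only [pow_zero, mul_one, integral_neg_log_mul_pow, natBeta_zero_right, zero_add,
      sum_range_one, Nat.cast_zero, add_zero]
    field_simp
  | succ b ih =>
    have hsplit : ∀ x : ℝ, -log x * x ^ a * (1 - x) ^ (b + 1) =
        -log x * x ^ a * (1 - x) ^ b - -log x * x ^ (a + 1) * (1 - x) ^ b :=
      fun x => by ring
    have hshift : ∑ j ∈ range (b + 1), 1 / ((a + 1 : ℕ) + 1 + j : ℝ) =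
        ∑ j ∈ range (b + 2), 1 / (a + 1 + j : ℝ) - 1 / (a + 1) := by
      rw [sum_range_succ' _ (b + 1)]
      push_cast
      ring_nf
    simp_rw [hsplit]
    rw [intervalIntegral.integral_sub (intervalIntegrable_neg_log_mul_pow_mul_one_sub_pow a b)
      (intervalIntegrable_neg_log_mul_pow_mul_one_sub_pow (a + 1) b), ih, ih, hshift,
      sum_range_succ _ (b + 1), ← natBeta_sub_natBeta_succ_left]
    push_cast
    linear_combination natBeta_succ_left_div a b

lemma sum_multinomial_mul_neg_one_pow_div (N m : ℕ) (hm : 0 < m) (hmN : m ≤ N) :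
    ∑ l ∈ range (N - m + 1),
      ((N ! : ℝ) / (m ! * l ! * (N - m - l)!)) * (-1) ^ l * (1 / (m + l)) = 1 / m := by
  obtain ⟨k, rfl⟩ : ∃ k, m = k + 1 := ⟨m - 1, by omega⟩
  obtain ⟨n, rfl⟩ : ∃ n, N = k + n + 1 := ⟨N - (k + 1), by omega⟩
  have hn : k + n + 1 - (k + 1) = n := by omega
  have hterm : ∀ l ∈ range (n + 1),
      (((k + n + 1)! : ℝ) / ((k + 1)! * l ! * (n - l)!)) * (-1) ^ l * (1 / ((k + 1 : ℕ) + l)) =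
        ((k + n + 1)! / ((k + 1)! * n !)) * ((-1) ^ l * n.choose l / (k + 1 + l)) := by
    intro l hl
    rw [Nat.cast_choose ℝ (Nat.lt_succ_iff.mp (mem_range.mp hl))]
    push_cast
    field_simp
  rw [hn, sum_congr rfl hterm, ← mul_sum, sum_range_neg_one_pow_mul_choose_div, natBeta,
    Nat.factorial_succ k]
  push_cast
  field_simp

lemma integral_withDensity_ite_Ioo_ofReal {f : ℝ → ℝ} (hf : Measurable f)
    (hf_nonneg : ∀ x ∈ Set.Ioo (0 : ℝ) 1, 0 ≤ f x) (g : ℝ → ℝ) :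
    ∫ y, g y ∂volume.withDensity
        (fun x => if 0 < x ∧ x < 1 then ENNReal.ofReal (f x) else 0) =
      ∫ x in (0 : ℝ)..1, f x * g x := by
  have hind : (fun x => if 0 < x ∧ x < 1 then ENNReal.ofReal (f x) else 0) =
      (Set.Ioo 0 1).indicator fun x => ENNReal.ofReal (f x) := by
    ext x
    simp only [Set.indicator_apply, Set.mem_Ioo]
  rw [hind, withDensity_indicator measurableSet_Ioo,
    integral_withDensity_eq_integral_toReal_smul hf.ennreal_ofReal
      (ae_of_all _ fun _ => ENNReal.ofReal_lt_top),
    intervalIntegral.integral_of_le zero_le_one, integral_Ioc_eq_integral_Ioo]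
  refine setIntegral_congr_fun measurableSet_Ioo fun x hx => ?_
  rw [ENNReal.toReal_ofReal (hf_nonneg x hx), smul_eq_mul]

lemma integral_neg_log_withDensity_natBeta (a b : ℕ) :
    ∫ y, -log y ∂volume.withDensity (fun x : ℝ =>
      if 0 < x ∧ x < 1 then ENNReal.ofReal (x ^ a * (1 - x) ^ b / natBeta a b) else 0) =
      ∑ m ∈ Icc (a + 1) (a + b + 1), 1 / (m : ℝ) := by
  have hdensity_nonneg : ∀ x ∈ Set.Ioo (0 : ℝ) 1, 0 ≤ x ^ a * (1 - x) ^ b / natBeta a b :=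
    fun x hx => div_nonneg (mul_nonneg (pow_nonneg hx.1.le a) (pow_nonneg (sub_nonneg.2 hx.2.le) b))
      (natBeta_pos a b).le
  have hintegrand : ∀ x : ℝ, x ^ a * (1 - x) ^ b / natBeta a b * -log x =
      (-log x * x ^ a * (1 - x) ^ b) / natBeta a b := fun x => by ring
  rw [integral_withDensity_ite_Ioo_ofReal (by fun_prop) hdensity_nonneg]
  simp_rw [hintegrand]
  rw [intervalIntegral.integral_div, integral_neg_log_mul_pow_mul_one_sub_pow,
    mul_div_cancel_left₀ _ (natBeta_pos a b).ne', ← Ico_add_one_right_eq_Icc,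
    sum_Ico_eq_sum_range, show a + b + 1 + 1 - (a + 1) = b + 1 by omega]
  push_cast
  ring_nf

/-- E[-ln Y] for Y ~ Beta(K-1, n_T-K). -/
theorem stmt_4 (nT K : ℕ) (hK : 1 < K) (hKn : K < nT)
    (μ : Measure ℝ)
    (hμ : μ = volume.withDensity (fun x : ℝ =>
      if 0 < x ∧ x < 1 then
        ENNReal.ofReal (x ^ (K - 2) * (1 - x) ^ (nT - K - 1) /
          (Real.Gamma ((K : ℝ) - 1) * Real.Gamma ((nT : ℝ) - K) /
            Real.Gamma ((nT : ℝ) - 1)))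
      else 0)) :
    ∫ y, -Real.log y ∂μ =
      ∑ m ∈ Finset.Icc (K - 1) (nT - 2), ∑ l ∈ Finset.range (nT - m - 1),
        ((Nat.factorial (nT - 2) : ℝ) /
            ((Nat.factorial m : ℝ) * (Nat.factorial l) * (Nat.factorial (nT - m - 2 - l)))) *
          (-1 : ℝ) ^ l * (1 / ((m : ℝ) + l)) := by
  obtain ⟨a, rfl⟩ : ∃ a, K = a + 2 := ⟨K - 2, by omega⟩
  obtain ⟨b, rfl⟩ : ∃ b, nT = a + b + 3 := ⟨nT - (a + 2) - 1, by omega⟩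
  have hB : Gamma (((a + 2 : ℕ) : ℝ) - 1) * Gamma (((a + b + 3 : ℕ) : ℝ) - (a + 2 : ℕ)) /
      Gamma (((a + b + 3 : ℕ) : ℝ) - 1) = natBeta a b := by
    rw [← Gamma_mul_Gamma_div_Gamma_eq_natBeta]
    push_cast
    ring_nf
  rw [hμ, show a + 2 - 2 = a by omega, show a + b + 3 - (a + 2) - 1 = b by omega, hB,
    integral_neg_log_withDensity_natBeta, show a + 2 - 1 = a + 1 by omega,
    show a + b + 3 - 2 = a + b + 1 by omega]
  refine sum_congr rfl fun m hm => ?_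
  rw [mem_Icc] at hm
  rw [← sum_multinomial_mul_neg_one_pow_div (a + b + 1) m (by omega) (by omega),
    show a + b + 3 - m - 1 = a + b + 1 - m + 1 by omega]
  refine sum_congr rfl fun l _ => ?_
  rw [show a + b + 3 - m - 2 - l = a + b + 1 - m - l by omega]
end

section
/- For integers n ≥ 1 and n_T ≥ 2 and any 1 ≤ i ≤ n_T - 1, Γ(n)/Γ(n + i/(n_T-1)) ≤ (n - 1/2 + i/(2(n_T-1)))^{-i/(n_T-1)} ≤ (n - 1/2)^{-i/(n_T-1)}. -/
/-!
Let `L(x) = log ((x - 1/2 + t/2) ^ t * Γ(x) / Γ(x + t))`. Since `Γ(x + 1) = x Γ(x)`, the step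
`L(x) ≤ L(x + 1)` amounts to `log (x + t) - log x ≤ t (log (a + 1) - log a)` with
`a = x - 1/2 + t/2`, i.e. to the convexity of `u ↦ log (c + u) - log (c - u)` at `c = x + t/2`,
between `u = 0` and `u = 1/2`. Log-convexity of `Γ` bounds `L(y)` by a quantity tending to `0` as
`y → ∞`, hence `L(x) ≤ L(x + k) ≤ o(1)` gives `L(x) ≤ 0`.
-/

open Real Set Filter Topology

lemma convexOn_log_add_sub_log_sub {c : ℝ} (hc : 0 < c) :
    ConvexOn ℝ (Ico 0 c) fun u => log (c + u) - log (c - u) := by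
  have hpos : ∀ u ∈ Ico 0 c, 0 < c + u ∧ 0 < c - u := fun u hu =>
    ⟨by linarith [hu.1], by linarith [hu.2]⟩
  have hint : interior (Ico 0 c) ⊆ Ico 0 c := interior_subset
  refine convexOn_of_hasDerivWithinAt2_nonneg (f' := fun u => (c + u)⁻¹ + (c - u)⁻¹)
    (f'' := fun u => -((c + u) ^ 2)⁻¹ + ((c - u) ^ 2)⁻¹) (convex_Ico 0 c) ?_ ?_ ?_ ?_
  · exact fun u hu => ((continuousAt_const.add continuousAt_id).log (hpos u hu).1.ne').sub
      ((continuousAt_const.sub continuousAt_id).log (hpos u hu).2.ne') |>.continuousWithinAt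
  · intro u hu
    obtain ⟨h₁, h₂⟩ := hpos u (hint hu)
    have := (((hasDerivAt_id u).const_add c).log h₁.ne').sub
      (((hasDerivAt_id u).const_sub c).log h₂.ne')
    exact (this.congr_deriv (by simp only [id]; ring)).hasDerivWithinAt
  · intro u hu
    obtain ⟨h₁, h₂⟩ := hpos u (hint hu)
    have := (((hasDerivAt_id u).const_add c).inv h₁.ne').add
      (((hasDerivAt_id u).const_sub c).inv h₂.ne')
    exact (this.congr_deriv (by simp only [id]; ring)).hasDerivWithinAt
  · intro u hu
    have h₂ := (hpos u (hint hu)).2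
    have : (c - u) ^ 2 ≤ (c + u) ^ 2 := by nlinarith [(hint hu).1]
    simpa using inv_anti₀ (by positivity) this

lemma log_add_mul_sub_log_sub_mul_le {c u t : ℝ} (hu : u ∈ Ico 0 c) (ht₀ : 0 ≤ t) (ht₁ : t ≤ 1) :
    log (c + t * u) - log (c - t * u) ≤ t * (log (c + u) - log (c - u)) := by
  have hc : 0 < c := hu.1.trans_lt hu.2
  have h := (convexOn_log_add_sub_log_sub hc).2 (left_mem_Ico.2 hc) hu (sub_nonneg.2 ht₁) ht₀
    (sub_add_cancel 1 t)
  simpa only [smul_eq_mul, mul_zero, zero_add, add_zero, sub_zero, sub_self] using h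

-- Log-convexity of `Γ` at `x + 1 = t (x + t) + (1 - t) (x + t + 1)`.
lemma log_Gamma_sub_log_Gamma_add_le {x t : ℝ} (hx : 0 < x) (ht₀ : 0 ≤ t) (ht₁ : t ≤ 1) :
    log (Gamma x) - log (Gamma (x + t)) ≤ (1 - t) * log (x + t) - log x := by
  have hxt : 0 < x + t := by linarith
  have h := convexOn_log_Gamma.2 (mem_Ioi.2 hxt) (mem_Ioi.2 (by linarith : 0 < x + t + 1)) ht₀
    (sub_nonneg.2 ht₁) (add_sub_cancel t 1)
  simp only [smul_eq_mul, Function.comp_apply] at h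
  rw [show t * (x + t) + (1 - t) * (x + t + 1) = x + 1 by ring, Gamma_add_one hx.ne',
    Gamma_add_one hxt.ne', log_mul hx.ne' (Gamma_pos_of_pos hx).ne',
    log_mul hxt.ne' (Gamma_pos_of_pos hxt).ne'] at h
  linarith

noncomputable def logKershawRatio (t x : ℝ) : ℝ :=
  t * log (x - 1 / 2 + t / 2) + log (Gamma x) - log (Gamma (x + t))

lemma logKershawRatio_le_add_one {x t : ℝ} (ht₀ : 0 ≤ t) (ht₁ : t ≤ 1) (hx : 1 < 2 * x + t) :
    logKershawRatio t x ≤ logKershawRatio t (x + 1) := by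
  have hx₀ : 0 < x := by linarith
  have hxt : 0 < x + t := by linarith
  have h := log_add_mul_sub_log_sub_mul_le (c := x + t / 2) (u := 1 / 2)
    ⟨by norm_num, by linarith⟩ ht₀ ht₁
  rw [show x + t / 2 + t * (1 / 2) = x + t by ring, show x + t / 2 - t * (1 / 2) = x by ring,
    show x + t / 2 + 1 / 2 = x + 1 - 1 / 2 + t / 2 by ring,
    show x + t / 2 - 1 / 2 = x - 1 / 2 + t / 2 by ring] at h
  unfold logKershawRatio
  rw [add_right_comm x 1 t, Gamma_add_one hx₀.ne', Gamma_add_one hxt.ne',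
    log_mul hx₀.ne' (Gamma_pos_of_pos hx₀).ne', log_mul hxt.ne' (Gamma_pos_of_pos hxt).ne']
  linarith

lemma logKershawRatio_le_add_nat {x t : ℝ} (ht₀ : 0 ≤ t) (ht₁ : t ≤ 1) (hx : 1 < 2 * x + t)
    (k : ℕ) : logKershawRatio t x ≤ logKershawRatio t (x + k) := by
  induction k with
  | zero => simp
  | succ k ih =>
    have hk : 1 < 2 * (x + k) + t := by linarith [(k.cast_nonneg : (0 : ℝ) ≤ k)]
    exact ih.trans (by simpa [← add_assoc] using logKershawRatio_le_add_one ht₀ ht₁ hk)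

lemma logKershawRatio_le {x t : ℝ} (ht₀ : 0 ≤ t) (ht₁ : t ≤ 1) (hx : 1 < 2 * x + t) :
    logKershawRatio t x ≤
      t * (log (x + (t - 1) / 2) - log x) + (1 - t) * (log (x + t) - log x) := by
  have hx₀ : 0 < x := by linarith
  have h := log_Gamma_sub_log_Gamma_add_le hx₀ ht₀ ht₁
  unfold logKershawRatio
  rw [show x + (t - 1) / 2 = x - 1 / 2 + t / 2 by ring]
  linarith

lemma tendsto_logKershawRatio_bound (t : ℝ) :
    Tendsto (fun x => t * (log (x + (t - 1) / 2) - log x) + (1 - t) * (log (x + t) - log x))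
      atTop (𝓝 0) := by
  simpa using ((tendsto_log_comp_add_sub_log ((t - 1) / 2)).const_mul t).add
    ((tendsto_log_comp_add_sub_log t).const_mul (1 - t))

lemma logKershawRatio_nonpos {x t : ℝ} (ht₀ : 0 ≤ t) (ht₁ : t ≤ 1) (hx : 1 < 2 * x + t) :
    logKershawRatio t x ≤ 0 := by
  have hshift : Tendsto (fun k : ℕ => x + k) atTop atTop :=
    tendsto_atTop_add_const_left _ _ tendsto_natCast_atTop_atTop
  refine ge_of_tendsto' ((tendsto_logKershawRatio_bound t).comp hshift) fun k => ?_
  have hk : 1 < 2 * (x + k) + t := by linarith [(k.cast_nonneg : (0 : ℝ) ≤ k)]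
  exact (logKershawRatio_le_add_nat ht₀ ht₁ hx k).trans (logKershawRatio_le ht₀ ht₁ hk)

theorem Gamma_div_Gamma_add_le_rpow {x t : ℝ} (ht₀ : 0 ≤ t) (ht₁ : t ≤ 1) (hx : 1 < 2 * x + t) :
    Gamma x / Gamma (x + t) ≤ (x - 1 / 2 + t / 2) ^ (-t) := by
  have ha : 0 < x - 1 / 2 + t / 2 := by linarith
  have hΓ : 0 < Gamma x := Gamma_pos_of_pos (by linarith)
  have hΓt : 0 < Gamma (x + t) := Gamma_pos_of_pos (by linarith)
  have h := logKershawRatio_nonpos ht₀ ht₁ hx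
  unfold logKershawRatio at h
  rw [← log_le_log_iff (div_pos hΓ hΓt) (rpow_pos_of_pos ha _), log_div hΓ.ne' hΓt.ne',
    log_rpow ha]
  linarith

theorem stmt_10_general (n nT i : ℕ) (hn : 1 ≤ n) (hnT : 2 ≤ nT) (hi2 : i ≤ nT - 1) :
    Real.Gamma (n : ℝ) / Real.Gamma ((n : ℝ) + (i : ℝ) / ((nT : ℝ) - 1)) ≤
        ((n : ℝ) - 1 / 2 + (i : ℝ) / (2 * ((nT : ℝ) - 1))) ^ (-((i : ℝ) / ((nT : ℝ) - 1))) ∧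
      ((n : ℝ) - 1 / 2 + (i : ℝ) / (2 * ((nT : ℝ) - 1))) ^ (-((i : ℝ) / ((nT : ℝ) - 1))) ≤
        ((n : ℝ) - 1 / 2) ^ (-((i : ℝ) / ((nT : ℝ) - 1))) := by
  have hn' : (1 : ℝ) ≤ n := by exact_mod_cast hn
  have hd : (0 : ℝ) < nT - 1 := by
    rw [sub_pos]; exact_mod_cast hnT
  have hi : (i : ℝ) ≤ nT - 1 := by
    rw [le_sub_iff_add_le]; exact_mod_cast (by omega : i + 1 ≤ nT)
  set t : ℝ := i / (nT - 1)
  have ht₀ : 0 ≤ t := div_nonneg i.cast_nonneg hd.le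
  have ht₁ : t ≤ 1 := (div_le_one hd).2 hi
  rw [show (i : ℝ) / (2 * (nT - 1)) = t / 2 by rw [mul_comm, ← div_div]]
  exact ⟨Gamma_div_Gamma_add_le_rpow ht₀ ht₁ (by linarith),
    rpow_le_rpow_of_nonpos (by linarith) (by linarith) (neg_nonpos.2 ht₀)⟩

/-- consequence of Kershaw's inequality. -/
theorem stmt_10 (n nT i : ℕ) (hn : 1 ≤ n) (hnT : 2 ≤ nT) (hi1 : 1 ≤ i) (hi2 : i ≤ nT - 1) :
    Real.Gamma (n : ℝ) / Real.Gamma ((n : ℝ) + (i : ℝ) / ((nT : ℝ) - 1)) ≤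
        ((n : ℝ) - 1 / 2 + (i : ℝ) / (2 * ((nT : ℝ) - 1))) ^ (-((i : ℝ) / ((nT : ℝ) - 1))) ∧
      ((n : ℝ) - 1 / 2 + (i : ℝ) / (2 * ((nT : ℝ) - 1))) ^ (-((i : ℝ) / ((nT : ℝ) - 1))) ≤
        ((n : ℝ) - 1 / 2) ^ (-((i : ℝ) / ((nT : ℝ) - 1))) :=
  stmt_10_general n nT i hn hnT hi2
end

section
/- For integers n ≥ 1 and n_T ≥ 2, Σ_{i=1}^{n_T-1} B(n, i/(n_T-1)) ≤ Σ_{i=1}^{n_T-1} Γ(i/(n_T-1)) (n - 1/2)^{-i/(n_T-1)}, and for fixed n_T the right-hand side is a strictly decreasing function of n that tends to 0 as n → ∞. -/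
/-!
For `s > 0` the ratio `r m = Γ(m) (m - 1/2)^s / Γ(m + s)` is nondecreasing in `m ≥ 1`: by the
functional equation this amounts to `(m + s) (m - 1/2)^s ≤ m (m + 1/2)^s`, which follows from
`1 + s/m ≤ exp (s/m)` and `log ((m + 1/2)/(m - 1/2)) ≥ 1/m` (the first term of the series of
`log (1 + x) - log (1 - x)`). Euler's limit formula gives `r m → 1`, so `r n ≤ 1`, which is
`B(n, s) ≤ Γ(s) (n - 1/2)^(-s)`. The monotonicity and the limit of the bound are termwise.
-/

open Real Filter Topology

namespace Real

theorem two_div_two_mul_add_one_le_log_one_add_inv {a : ℝ} (ha : 0 < a) :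
    2 / (2 * a + 1) ≤ log (1 + a⁻¹) := by
  have h := le_hasSum (hasSum_log_one_add_inv ha) 0 fun k _ => by positivity
  simpa [div_eq_mul_inv] using h

theorem add_mul_sub_half_rpow_le_mul_add_half_rpow {x s : ℝ} (hx : 1 / 2 < x) (hs : 0 ≤ s) :
    (x + s) * (x - 1 / 2) ^ s ≤ x * (x + 1 / 2) ^ s := by
  have hx0 : 0 < x := by linarith
  have hlog : 1 / x ≤ log ((x + 1 / 2) / (x - 1 / 2)) := by
    have hx' : x - 1 / 2 ≠ 0 := by linarith
    have hlhs : 2 / (2 * (x - 1 / 2) + 1) = 1 / x := by field_simp; ring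
    have hrhs : 1 + (x - 1 / 2)⁻¹ = (x + 1 / 2) / (x - 1 / 2) := by
      rw [eq_div_iff hx', add_mul, inv_mul_cancel₀ hx']
      ring
    simpa only [hlhs, hrhs] using
      two_div_two_mul_add_one_le_log_one_add_inv (a := x - 1 / 2) (by linarith)
  have hexp : 1 + s / x ≤ ((x + 1 / 2) / (x - 1 / 2)) ^ s :=
    calc 1 + s / x ≤ exp (s / x) := by linarith [add_one_le_exp (s / x)]
      _ ≤ exp (log ((x + 1 / 2) / (x - 1 / 2)) * s) := by
        gcongr
        rw [div_eq_mul_one_div, mul_comm]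
        exact mul_le_mul_of_nonneg_right hlog hs
      _ = _ := (rpow_def_of_pos (by positivity) s).symm
  have hpos : 0 < (x - 1 / 2) ^ s := rpow_pos_of_pos (by linarith) s
  rw [div_rpow (by linarith) (by linarith), le_div_iff₀ hpos] at hexp
  calc (x + s) * (x - 1 / 2) ^ s = x * ((1 + s / x) * (x - 1 / 2) ^ s) := by
        field_simp
    _ ≤ x * (x + 1 / 2) ^ s := by gcongr

theorem Gamma_add_nat_eq_mul_prod {s : ℝ} (hs : 0 < s) (n : ℕ) :
    Gamma (s + n) = Gamma s * ∏ j ∈ Finset.range n, (s + j) := by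
  induction n with
  | zero => simp
  | succ n ih =>
    rw [Nat.cast_succ, ← add_assoc, Gamma_add_one (by positivity), ih, Finset.prod_range_succ]
    ring

noncomputable def gammaHalfShiftRatio (s : ℝ) (m : ℕ) : ℝ :=
  Gamma m * ((m : ℝ) - 1 / 2) ^ s / Gamma (m + s)

theorem gammaHalfShiftRatio_le_succ {s : ℝ} (hs : 0 ≤ s) {m : ℕ} (hm : 1 ≤ m) :
    gammaHalfShiftRatio s m ≤ gammaHalfShiftRatio s (m + 1) := by
  have hm' : (1 : ℝ) ≤ m := by exact_mod_cast hm
  have hΓm : 0 < Gamma m := Gamma_pos_of_pos (by positivity)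
  have hΓms : 0 < Gamma (m + s) := Gamma_pos_of_pos (by positivity)
  unfold gammaHalfShiftRatio
  rw [Nat.cast_succ, add_right_comm, Gamma_add_one (by positivity), Gamma_add_one (by positivity),
    div_le_div_iff₀ hΓms (by positivity), show (m : ℝ) + 1 - 1 / 2 = m + 1 / 2 by ring]
  calc Gamma m * (m - 1 / 2) ^ s * ((m + s) * Gamma (m + s))
      = Gamma m * Gamma (m + s) * ((m + s) * (m - 1 / 2) ^ s) := by ring
    _ ≤ Gamma m * Gamma (m + s) * (m * (m + 1 / 2) ^ s) :=
      mul_le_mul_of_nonneg_left (add_mul_sub_half_rpow_le_mul_add_half_rpow (by linarith) hs)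
        (by positivity)
    _ = m * Gamma m * (m + 1 / 2) ^ s * Gamma (m + s) := by ring

theorem gammaHalfShiftRatio_succ_eq {s : ℝ} (hs : 0 < s) {n : ℕ} (hn : 1 ≤ n) :
    gammaHalfShiftRatio s (n + 1) = GammaSeq s n / Gamma s * ((n + 1 / 2) / n) ^ s := by
  have hn' : (0 : ℝ) < n := by exact_mod_cast hn
  have hprod := Gamma_add_nat_eq_mul_prod hs (n + 1)
  have hΓs : 0 < Gamma s := Gamma_pos_of_pos hs
  rw [gammaHalfShiftRatio, GammaSeq, div_rpow (by positivity) hn'.le, Nat.cast_succ,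
    Gamma_nat_eq_factorial, add_comm _ s, ← Nat.cast_succ, hprod,
    show ((n.succ : ℕ) : ℝ) - 1 / 2 = n + 1 / 2 by push_cast; ring]
  have : (0 : ℝ) < n ^ s := rpow_pos_of_pos hn' s
  field_simp

theorem tendsto_gammaHalfShiftRatio {s : ℝ} (hs : 0 < s) :
    Tendsto (gammaHalfShiftRatio s) atTop (𝓝 1) := by
  rw [← tendsto_add_atTop_iff_nat 1]
  have hseq : Tendsto (fun n : ℕ => GammaSeq s n / Gamma s) atTop (𝓝 1) := by
    simpa [(Gamma_pos_of_pos hs).ne'] using (GammaSeq_tendsto_Gamma s).div_const (Gamma s)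
  have hbase : Tendsto (fun n : ℕ => ((n : ℝ) + 1 / 2) / n) atTop (𝓝 1) := by
    have h := (tendsto_const_div_atTop_nhds_zero_nat (1 / 2 : ℝ)).const_add 1
    rw [add_zero] at h
    refine h.congr' <| (eventually_ne_atTop 0).mono fun n hn => ?_
    dsimp only
    rw [add_div, div_self (Nat.cast_ne_zero.mpr hn)]
  have hpow := hbase.rpow_const (p := s) (Or.inl one_ne_zero)
  rw [one_rpow] at hpow
  simpa using (hseq.mul hpow).congr' <| (eventually_ge_atTop 1).mono
    fun n hn => (gammaHalfShiftRatio_succ_eq hs hn).symm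

theorem gammaHalfShiftRatio_le_one {s : ℝ} (hs : 0 < s) {n : ℕ} (hn : 1 ≤ n) :
    gammaHalfShiftRatio s n ≤ 1 := by
  have hmono : Monotone fun k => gammaHalfShiftRatio s (k + n) :=
    monotone_nat_of_le_succ fun k => by
      rw [Nat.add_right_comm]
      exact gammaHalfShiftRatio_le_succ hs.le (by omega)
  simpa using hmono.ge_of_tendsto
    ((tendsto_add_atTop_iff_nat n).mpr (tendsto_gammaHalfShiftRatio hs)) 0

theorem Gamma_mul_Gamma_div_Gamma_add_le {s : ℝ} (hs : 0 < s) {n : ℕ} (hn : 1 ≤ n) :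
    Gamma n * Gamma s / Gamma (n + s) ≤ Gamma s * ((n : ℝ) - 1 / 2) ^ (-s) := by
  have hn' : (1 : ℝ) ≤ n := by exact_mod_cast hn
  have hpos : 0 < ((n : ℝ) - 1 / 2) ^ s := rpow_pos_of_pos (by linarith) s
  have h := gammaHalfShiftRatio_le_one hs hn
  rw [gammaHalfShiftRatio, mul_div_right_comm, ← le_div_iff₀ hpos, one_div] at h
  rw [rpow_neg (by linarith), mul_div_right_comm, mul_comm (Gamma s)]
  exact mul_le_mul_of_nonneg_right h (Gamma_pos_of_pos hs).le

theorem strictAntiOn_natCast_sub_half_rpow_neg {s : ℝ} (hs : 0 < s) :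
    StrictAntiOn (fun n : ℕ => ((n : ℝ) - 1 / 2) ^ (-s)) (Set.Ici 1) := by
  intro a ha b _ hab
  have ha' : (1 : ℝ) ≤ a := by exact_mod_cast ha
  have hab' : (a : ℝ) < b := by exact_mod_cast hab
  exact rpow_lt_rpow_of_neg (by linarith) (by linarith) (neg_neg_of_pos hs)

theorem tendsto_natCast_sub_half_rpow_neg {s : ℝ} (hs : 0 < s) :
    Tendsto (fun n : ℕ => ((n : ℝ) - 1 / 2) ^ (-s)) atTop (𝓝 0) :=
  (tendsto_rpow_neg_atTop hs).comp <|
    tendsto_atTop_add_const_right _ _ tendsto_natCast_atTop_atTop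

end Real

/-- the beta-function sum is bounded by a quantity that is strictly
decreasing in n and tends to 0 as n → ∞. -/
theorem stmt_11 (nT : ℕ) (hnT : 2 ≤ nT) :
    (∀ n : ℕ, 1 ≤ n →
      ∑ i ∈ Finset.Icc 1 (nT - 1),
          Real.Gamma (n : ℝ) * Real.Gamma ((i : ℝ) / ((nT : ℝ) - 1)) /
            Real.Gamma ((n : ℝ) + (i : ℝ) / ((nT : ℝ) - 1)) ≤
        ∑ i ∈ Finset.Icc 1 (nT - 1),
          Real.Gamma ((i : ℝ) / ((nT : ℝ) - 1)) *
            ((n : ℝ) - 1 / 2) ^ (-((i : ℝ) / ((nT : ℝ) - 1)))) ∧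
    StrictAntiOn (fun n : ℕ =>
      ∑ i ∈ Finset.Icc 1 (nT - 1),
        Real.Gamma ((i : ℝ) / ((nT : ℝ) - 1)) *
          ((n : ℝ) - 1 / 2) ^ (-((i : ℝ) / ((nT : ℝ) - 1)))) (Set.Ici 1) ∧
    Tendsto (fun n : ℕ =>
      ∑ i ∈ Finset.Icc 1 (nT - 1),
        Real.Gamma ((i : ℝ) / ((nT : ℝ) - 1)) *
          ((n : ℝ) - 1 / 2) ^ (-((i : ℝ) / ((nT : ℝ) - 1)))) atTop (nhds 0) := by
  have hexp_pos : ∀ i ∈ Finset.Icc 1 (nT - 1), 0 < (i : ℝ) / ((nT : ℝ) - 1) := by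
    intro i hi
    have hi' : (1 : ℝ) ≤ i := by exact_mod_cast (Finset.mem_Icc.mp hi).1
    have hnT' : (2 : ℝ) ≤ nT := by exact_mod_cast hnT
    exact div_pos (by linarith) (by linarith)
  refine ⟨fun n hn => Finset.sum_le_sum fun i hi =>
      Real.Gamma_mul_Gamma_div_Gamma_add_le (hexp_pos i hi) hn, ?_, ?_⟩
  · intro a ha b hb hab
    refine Finset.sum_lt_sum_of_nonempty (Finset.nonempty_Icc.mpr (by omega)) fun i hi => ?_
    exact mul_lt_mul_of_pos_left
      (Real.strictAntiOn_natCast_sub_half_rpow_neg (hexp_pos i hi) ha hb hab)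
      (Real.Gamma_pos_of_pos (hexp_pos i hi))
  · simpa using tendsto_finsetSum _ fun i hi =>
      (Real.tendsto_natCast_sub_half_rpow_neg (hexp_pos i hi)).const_mul
        (Real.Gamma ((i : ℝ) / ((nT : ℝ) - 1)))
end

section
/- For n ≥ 1 and n_T ≥ 2, the following two expressions are equal: log₂(e) Σ_{i=1}^{n} binom(n,i)(-1)^i Σ_{l=1}^{i(n_T-1)} 1/l = -(log₂(e)/(n_T-1)) Σ_{i=1}^{n_T-1} B(n, i/(n_T-1)). -/
/-!
With `m = n_T - 1` and `n = p + 1`, both sides are `p`-th forward differences of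
`φ y = ∑_{i=1}^m (y + i/m)⁻¹` at `0`. The functional equation of `Γ` gives
`B(a + 1, x) = B(a, x) - B(a, x + 1)`, hence `B(p + 1, x) = (-1)^p Δ^p (y ↦ y⁻¹) x`, and summing over
`x = i/m` yields `(-1)^p Δ^p φ 0`. On the left, the binomial sum is `(-1)^n Δ^n` of
`k ↦ H_{km}` at `0`, and the first difference `H_{(k+1)m} - H_{km}` of that sequence is `φ k / m`.
-/

open Real Finset fwdDiff ProbabilityTheory

section FwdDiff

variable {M : Type*} [AddCommMonoid M]

theorem fwdDiff_iter_comp_addMonoidHom {M' G : Type*} [AddCommMonoid M'] [AddCommGroup G]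
    (ψ : M →+ M') (h : M) (f : M' → G) (n : ℕ) (y : M) :
    Δ_[h] ^[n] (f ∘ ψ) y = Δ_[ψ h] ^[n] f (ψ y) := by
  simp [fwdDiff_iter_eq_sum_shift, map_add, map_nsmul]

theorem neg_one_pow_mul_fwdDiff_iter_eq_sum {R : Type*} [CommRing R] (h : M) (f : M → R)
    (n : ℕ) (y : M) :
    (-1) ^ n * Δ_[h] ^[n] f y = ∑ k ∈ range (n + 1), (-1) ^ k * n.choose k * f (y + k • h) := by
  rw [fwdDiff_iter_eq_sum_shift, mul_sum]
  refine sum_congr rfl fun k hk => ?_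
  have hkn : k ≤ n := Nat.lt_succ_iff.mp (mem_range.mp hk)
  obtain ⟨j, rfl⟩ := Nat.exists_eq_add_of_le hkn
  have hsq : ((-1 : R) ^ j) ^ 2 = 1 := by rw [← pow_mul, mul_comm, pow_mul, neg_one_sq, one_pow]
  rw [zsmul_eq_mul, Nat.add_sub_cancel_left]
  push_cast
  linear_combination ((-1) ^ k * (k + j).choose k * f (y + k • h)) * hsq

end FwdDiff

theorem sum_Icc_one_add {G : Type*} [AddCommMonoid G] (f : ℕ → G) (a b : ℕ) :
    ∑ l ∈ Icc 1 (a + b), f l = ∑ l ∈ Icc 1 a, f l + ∑ i ∈ Icc 1 b, f (a + i) := by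
  have h (g : ℕ → G) (N : ℕ) : ∑ l ∈ Icc 1 N, g l = ∑ l ∈ range N, g (l + 1) := by
    rw [← Ico_add_one_right_eq_Icc, sum_Ico_eq_sum_range, Nat.add_sub_cancel]
    simp only [add_comm 1]
  simp only [h, sum_range_add, add_assoc]

namespace ProbabilityTheory

theorem beta_one_left {x : ℝ} (hx : 0 < x) : beta 1 x = x⁻¹ := by
  rw [beta, Gamma_one, add_comm, Gamma_add_one hx.ne']
  field_simp [(Gamma_pos_of_pos hx).ne']

theorem beta_add_one_left {a x : ℝ} (ha : 0 < a) (hx : 0 < x) :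
    beta (a + 1) x = beta a x - beta a (x + 1) := by
  have hΓ : Gamma (a + 1 + x) = (a + x) * Gamma (a + x) := by
    rw [add_right_comm, Gamma_add_one (by positivity)]
  rw [beta, beta, beta, Gamma_add_one ha.ne', Gamma_add_one hx.ne', hΓ, ← add_assoc,
    Gamma_add_one (by positivity)]
  field_simp [(Gamma_pos_of_pos (add_pos ha hx)).ne']
  ring

theorem beta_natCast_add_one_left (p : ℕ) {x : ℝ} (hx : 0 < x) :
    beta (p + 1) x = (-1) ^ p * Δ_[1] ^[p] (fun y : ℝ => y⁻¹) x := by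
  induction p generalizing x with
  | zero => simp [beta_one_left hx]
  | succ p ih =>
    rw [Nat.cast_succ, beta_add_one_left (by positivity) hx, ih hx, ih (by positivity),
      Function.iterate_succ_apply', fwdDiff]
    ring

end ProbabilityTheory

noncomputable def shiftedInvSum (m : ℕ) (y : ℝ) : ℝ := ∑ i ∈ Icc 1 m, (y + i / m)⁻¹

theorem inv_mul_shiftedInvSum_natCast (m k : ℕ) :
    (m : ℝ)⁻¹ * shiftedInvSum m k = ∑ i ∈ Icc 1 m, (1 : ℝ) / (k * m + i : ℕ) := by
  rw [shiftedInvSum, mul_sum]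
  refine sum_congr rfl fun i hi => ?_
  have hm : (m : ℝ) ≠ 0 := by
    have := (mem_Icc.mp hi).1.trans (mem_Icc.mp hi).2
    positivity
  rw [← mul_inv, one_div, mul_add, mul_div_cancel₀ _ hm]
  push_cast
  ring

theorem sum_beta_natCast_add_one_div (p m : ℕ) :
    ∑ i ∈ Icc 1 m, beta (p + 1) (i / m) = (-1) ^ p * Δ_[1] ^[p] (shiftedInvSum m) 0 := by
  have hφ : shiftedInvSum m = ∑ i ∈ Icc 1 m, fun y : ℝ => (y + i / m)⁻¹ := by
    ext y
    simp only [shiftedInvSum, Finset.sum_apply]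
  rw [hφ, fwdDiff_iter_finsetSum, Finset.sum_apply, mul_sum]
  refine sum_congr rfl fun i hi => ?_
  obtain ⟨hi1, him⟩ := mem_Icc.mp hi
  have hpos : (0 : ℝ) < i / m := by
    have : 1 ≤ m := hi1.trans him
    positivity
  rw [beta_natCast_add_one_left p hpos, fwdDiff_iter_comp_add 1 (fun y : ℝ => y⁻¹), zero_add]

theorem sum_choose_mul_sum_Icc_one_div (p m : ℕ) :
    ∑ i ∈ Icc 1 (p + 1), ((p + 1).choose i : ℝ) * (-1) ^ i * ∑ l ∈ Icc 1 (i * m), (1 : ℝ) / l =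
      -(-1) ^ p * (m : ℝ)⁻¹ * Δ_[1] ^[p] (shiftedInvSum m) 0 := by
  set g : ℕ → ℝ := fun i => ∑ l ∈ Icc 1 (i * m), (1 : ℝ) / l
  have hg : Δ_[1] g = (m : ℝ)⁻¹ • (shiftedInvSum m ∘ Nat.castAddMonoidHom ℝ) := by
    funext k
    simp only [fwdDiff, g, add_one_mul, sum_Icc_one_add, add_sub_cancel_left, Pi.smul_apply,
      Function.comp_apply, Nat.coe_castAddMonoidHom, smul_eq_mul, inv_mul_shiftedInvSum_natCast]
  calc ∑ i ∈ Icc 1 (p + 1), ((p + 1).choose i : ℝ) * (-1) ^ i * g i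
      = ∑ i ∈ range (p + 1 + 1), (-1) ^ i * ((p + 1).choose i : ℝ) * g (0 + i • 1) := by
        rw [range_eq_Ico, sum_eq_sum_Ico_succ_bot (by omega), Ico_add_one_right_eq_Icc]
        simp [g, mul_comm]
    _ = (-1) ^ (p + 1) * Δ_[1] ^[p + 1] g 0 := (neg_one_pow_mul_fwdDiff_iter_eq_sum ..).symm
    _ = -(-1) ^ p * (m : ℝ)⁻¹ * Δ_[1] ^[p] (shiftedInvSum m) 0 := by
        rw [Function.iterate_succ_apply, hg, fwdDiff_iter_const_smul, Pi.smul_apply,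
          fwdDiff_iter_comp_addMonoidHom, Nat.coe_castAddMonoidHom, Nat.cast_one,
          Nat.cast_zero, smul_eq_mul]
        ring

/-- equality of the two expressions for E[log₂ cos²θ]. -/
theorem stmt_17 (n nT : ℕ) (hn : 1 ≤ n) (hnT : 2 ≤ nT) :
    Real.logb 2 (Real.exp 1) *
        ∑ i ∈ Finset.Icc 1 n, (n.choose i : ℝ) * (-1 : ℝ) ^ i *
          ∑ l ∈ Finset.Icc 1 (i * (nT - 1)), (1 : ℝ) / (l : ℝ) =
      -(Real.logb 2 (Real.exp 1) / ((nT : ℝ) - 1)) *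
        ∑ i ∈ Finset.Icc 1 (nT - 1),
          Real.Gamma (n : ℝ) * Real.Gamma ((i : ℝ) / ((nT : ℝ) - 1)) /
            Real.Gamma ((n : ℝ) + (i : ℝ) / ((nT : ℝ) - 1)) := by
  obtain ⟨p, rfl⟩ : ∃ p, n = p + 1 := ⟨n - 1, by omega⟩
  have hm : (nT : ℝ) - 1 = (nT - 1 : ℕ) := by rw [Nat.cast_sub (by omega), Nat.cast_one]
  rw [hm]
  change _ = _ * ∑ i ∈ Icc 1 (nT - 1), beta ((p + 1 : ℕ) : ℝ) (i / (nT - 1 : ℕ))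
  rw [Nat.cast_succ, sum_beta_natCast_add_one_div, sum_choose_mul_sum_Icc_one_div]
  ring
end
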